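/- arXiv:2301.10029 — 6 statements merged into one kernel-verified Lean document; each statement's English description precedes it below -/
import Mathlib

section
/- For any bounded linear operator S on a complex Hilbert space, the numerical radius satisfies w(S) ≤ (1/2)(‖S‖ + ‖S²‖^{1/2}). -/
/-!
After rotating `S` by a unimodular scalar it suffices to bound `2 re ⟪S x, x⟫` for a unit
vector `x`. Write `a = re ⟪S x, x⟫`, `p = ‖S x‖`, `m = ‖S‖`, `s = ‖S²‖`. Pairing `S w`, for
`w = t x - S x`, with `S x` gives `t p² - s p ≤ re ⟪S w, S x⟫ ≤ m ‖w‖ p ≤ m/2 (‖w‖² + p²)`,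
that is `t p² - s p ≤ m/2 (t² - 2 t a + 2 p²)` for every real `t`. At the optimal
`t = a + p²/m` this reads `(p² - m (m - a))² + m³ (2a - m) ≤ 2 m p s`, and when `m < 2a` the
left side is at least `2 m p (2a - m)²`, whence `2a - m ≤ √s`.
-/

open scoped InnerProductSpace
variable {H : Type*} [NormedAddCommGroup H] [InnerProductSpace ℂ H] [CompleteSpace H]

/-- The numerical radius of a bounded operator. -/
noncomputable def numRadius (S : H →L[ℂ] H) : ℝ :=
  ⨆ x : {x : H // ‖x‖ = 1}, ‖⟪S x, x⟫_ℂ‖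

theorem two_mul_le_add_sqrt_of_forall_le {a p m s : ℝ} (hap : a ≤ p) (hpm : p ≤ m)
    (h : ∀ t : ℝ, t * p ^ 2 - s * p ≤ m / 2 * (t ^ 2 - 2 * t * a + 2 * p ^ 2)) :
    2 * a ≤ m + √s := by
  rcases le_or_gt (2 * a) m with hma | hma
  · linarith [Real.sqrt_nonneg s]
  have hm : 0 < m := by linarith
  have hp : 0 < p := by linarith
  have hpoly : 2 * m * p * (2 * a - m) ^ 2 ≤ m ^ 3 * (2 * a - m) + (p ^ 2 - m * (m - a)) ^ 2 := by
    obtain ⟨u, hu, rfl⟩ : ∃ u, 0 ≤ u ∧ m = p + u := ⟨m - p, by linarith, by ring⟩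
    obtain ⟨v, hv, rfl⟩ : ∃ v, 0 ≤ v ∧ p = a + v := ⟨p - a, by linarith, by ring⟩
    obtain ⟨c, hc, rfl⟩ : ∃ c, 0 ≤ c ∧ a = c + u + v := ⟨a - u - v, by linarith, by ring⟩
    have hQ : 0 ≤ c * (20 * v ^ 3 + 28 * u * v ^ 2 + 18 * u ^ 2 * v + 6 * u ^ 3
        + c * (17 * v ^ 2 + 18 * u * v + 7 * u ^ 2) + c ^ 2 * (4 * v + 2 * u)) := by positivity
    nlinarith [sq_nonneg (2 * v ^ 2 - u ^ 2)]
  have ht := h (a + p ^ 2 / m)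
  have hs : m ^ 3 * (2 * a - m) + (p ^ 2 - m * (m - a)) ^ 2 ≤ 2 * m * p * s := by
    field_simp at ht
    nlinarith [ht]
  have hsq : (2 * a - m) ^ 2 ≤ s := le_of_mul_le_mul_left (hpoly.trans hs) (by positivity)
  linarith [(Real.le_sqrt' (by linarith)).2 hsq]

section
variable {𝕜 E : Type*} [RCLike 𝕜] [NormedAddCommGroup E] [InnerProductSpace 𝕜 E]
open RCLike ComplexConjugate

theorem re_inner_apply_apply_le (S : E →L[𝕜] E) (x : E) :
    re ⟪S (S x), S x⟫_𝕜 ≤ ‖S ^ 2‖ * ‖x‖ * ‖S x‖ :=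
  calc re ⟪S (S x), S x⟫_𝕜 ≤ ‖(S ^ 2) x‖ * ‖S x‖ := (re_le_norm _).trans (norm_inner_le_norm _ _)
    _ ≤ ‖S ^ 2‖ * ‖x‖ * ‖S x‖ := by gcongr; exact (S ^ 2).le_opNorm x

theorem norm_ofReal_smul_sub_sq (t : ℝ) (x y : E) :
    ‖(t : 𝕜) • x - y‖ ^ 2 = t ^ 2 * ‖x‖ ^ 2 - 2 * t * re ⟪x, y⟫_𝕜 + ‖y‖ ^ 2 := by
  rw [@norm_sub_sq 𝕜, inner_smul_real_left, norm_smul, norm_ofReal, mul_pow, sq_abs]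
  simp only [real_smul_eq_coe_mul, re_ofReal_mul]
  ring

theorem mul_norm_apply_sq_sub_le (S : E →L[𝕜] E) {x : E} (hx : ‖x‖ = 1) (t : ℝ) :
    t * ‖S x‖ ^ 2 - ‖S ^ 2‖ * ‖S x‖ ≤
      ‖S‖ / 2 * (t ^ 2 - 2 * t * re ⟪S x, x⟫_𝕜 + 2 * ‖S x‖ ^ 2) := by
  set w := (t : 𝕜) • x - S x
  have hw : ‖w‖ ^ 2 = t ^ 2 - 2 * t * re ⟪S x, x⟫_𝕜 + ‖S x‖ ^ 2 := by
    rw [norm_ofReal_smul_sub_sq, hx, ← inner_conj_symm, conj_re]; ring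
  calc t * ‖S x‖ ^ 2 - ‖S ^ 2‖ * ‖S x‖ ≤ re ⟪S w, S x⟫_𝕜 := by
        have h2 := re_inner_apply_apply_le S x
        rw [hx, mul_one] at h2
        simp only [w, map_sub, map_smul, inner_sub_left, inner_smul_real_left,
          inner_self_eq_norm_sq, real_smul_eq_coe_mul, re_ofReal_mul]
        linarith
    _ ≤ ‖S‖ * ‖w‖ * ‖S x‖ := by
        refine (re_le_norm _).trans ((norm_inner_le_norm _ _).trans ?_)
        gcongr
        exact S.le_opNorm w
    _ ≤ ‖S‖ / 2 * (‖w‖ ^ 2 + ‖S x‖ ^ 2) := by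
        nlinarith [mul_nonneg (norm_nonneg S) (sq_nonneg (‖w‖ - ‖S x‖))]
    _ = ‖S‖ / 2 * (t ^ 2 - 2 * t * re ⟪S x, x⟫_𝕜 + 2 * ‖S x‖ ^ 2) := by rw [hw]; ring

theorem two_mul_re_inner_apply_self_le (S : E →L[𝕜] E) {x : E} (hx : ‖x‖ = 1) :
    2 * re ⟪S x, x⟫_𝕜 ≤ ‖S‖ + √‖S ^ 2‖ := by
  refine two_mul_le_add_sqrt_of_forall_le ?_ ?_ (mul_norm_apply_sq_sub_le S hx)
  · simpa [hx] using (re_le_norm _).trans (norm_inner_le_norm (𝕜 := 𝕜) (S x) x)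
  · simpa [hx] using S.le_opNorm x

theorem norm_inner_apply_self_le (S : E →L[𝕜] E) {x : E} (hx : ‖x‖ = 1) :
    ‖⟪S x, x⟫_𝕜‖ ≤ 1 / 2 * (‖S‖ + √‖S ^ 2‖) := by
  obtain ⟨c, hc, hcS⟩ := exists_norm_eq_mul_self ⟪S x, x⟫_𝕜
  have hrot := two_mul_re_inner_apply_self_le (conj c • S) hx
  rw [smul_apply, inner_smul_left, conj_conj, ← hcS, ofReal_re, smul_pow, norm_smul, norm_smul,
    norm_pow, norm_conj, hc, one_pow, one_mul, one_mul] at hrot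
  linarith

end

theorem numRadius_le_half_norm_add_sqrt_norm_sq (S : H →L[ℂ] H) :
    numRadius S ≤ (1 / 2) * (‖S‖ + Real.sqrt ‖S ^ 2‖) :=
  Real.iSup_le (fun x => norm_inner_apply_self_le S x.2) (by positivity)
end

section
/- If S and T are normal bounded operators on a complex Hilbert space, then ‖S + T‖ ≤ ‖ |S| + |T| ‖, where |S| = (S*S)^{1/2}. -/
/-!
For normal `a`, the continuous functions `z / √|z|` and `√|z|` factor `z`, so the functional
calculus writes `a = f * g` with `f * f⋆ = g⋆ * g = |a|`. For two normal elements, Cauchy–Schwarz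
in the Hilbert C⋆-module `A × A` (applied to `(g₁⋆, g₂⋆)` and `(f₁, f₂)`) gives
`‖f₁ g₁ + f₂ g₂‖² ≤ ‖f₁ f₁⋆ + f₂ f₂⋆‖ ‖g₁⋆ g₁ + g₂⋆ g₂‖ = ‖|a| + |b|‖²`.
-/

open scoped InnerProductSpace
variable {H : Type*} [NormedAddCommGroup H] [InnerProductSpace ℂ H] [CompleteSpace H]

/-- The absolute value `|S| = (S*S)^(1/2)` of a bounded operator. -/
noncomputable def absOp (S : H →L[ℂ] H) : H →L[ℂ] H := CFC.sqrt (star S * S)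

open scoped WithCStarModule ComplexConjugate

namespace Complex

theorem norm_div_sqrt_norm (z : ℂ) : ‖z / (√‖z‖ : ℂ)‖ = √‖z‖ := by
  rcases eq_or_ne z 0 with rfl | hz
  · simp
  · rw [norm_div, norm_real, Real.norm_of_nonneg (Real.sqrt_nonneg _), div_eq_iff (by positivity),
      Real.mul_self_sqrt (norm_nonneg _)]

theorem continuous_div_sqrt_norm : Continuous fun z : ℂ => z / (√‖z‖ : ℂ) := by
  rw [continuous_iff_continuousAt]
  intro z
  rcases eq_or_ne z 0 with rfl | hz
  · have h : Filter.Tendsto (fun z : ℂ => ‖z / (√‖z‖ : ℂ)‖) (nhds 0) (nhds 0) := by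
      simp_rw [norm_div_sqrt_norm]
      simpa using (continuous_norm.sqrt).tendsto (0 : ℂ)
    rw [ContinuousAt, zero_div]
    exact tendsto_zero_iff_norm_tendsto_zero.mpr h
  · exact (continuous_id.continuousAt).div (by fun_prop) (by simpa using hz)

theorem div_sqrt_norm_mul_sqrt_norm (z : ℂ) : z / (√‖z‖ : ℂ) * (√‖z‖ : ℂ) = z := by
  rcases eq_or_ne z 0 with rfl | hz
  · simp
  · exact div_mul_cancel₀ _ (by simpa using hz)

theorem div_sqrt_norm_mul_conj (z : ℂ) : z / (√‖z‖ : ℂ) * conj (z / (√‖z‖ : ℂ)) = ‖z‖ := by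
  rw [mul_conj', norm_div_sqrt_norm]
  norm_cast
  exact Real.sq_sqrt (norm_nonneg _)

end Complex

section CStarAlgebra

variable {A : Type*} [CStarAlgebra A] [PartialOrder A] [StarOrderedRing A]

theorem norm_mul_add_mul_sq_le (a₁ a₂ b₁ b₂ : A) :
    ‖a₁ * b₁ + a₂ * b₂‖ ^ 2 ≤ ‖a₁ * star a₁ + a₂ * star a₂‖ * ‖star b₁ * b₁ + star b₂ * b₂‖ := by
  let x : C⋆ᵐᵒᵈ(A, A × A) := (WithCStarModule.equiv A (A × A)).symm (star b₁, star b₂)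
  let y : C⋆ᵐᵒᵈ(A, A × A) := (WithCStarModule.equiv A (A × A)).symm (a₁, a₂)
  have hxy : ⟪x, y⟫_A = a₁ * b₁ + a₂ * b₂ := by
    simp [x, y, WithCStarModule.prod_inner, WithCStarModule.inner_def]
  calc ‖a₁ * b₁ + a₂ * b₂‖ ^ 2 = ‖⟪x, y⟫_A‖ ^ 2 := by rw [hxy]
    _ ≤ (‖x‖ * ‖y‖) ^ 2 := by gcongr; exact CStarModule.norm_inner_le _
    _ = ‖y‖ ^ 2 * ‖x‖ ^ 2 := by ring
    _ = ‖a₁ * star a₁ + a₂ * star a₂‖ * ‖star b₁ * b₁ + star b₂ * b₂‖ := by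
      simp [x, y, WithCStarModule.prod_norm_sq, WithCStarModule.inner_def]

theorem IsStarNormal.exists_eq_mul_mul_star_eq_star_mul_eq_cfcAbs {a : A} (ha : IsStarNormal a) :
    ∃ f g : A, a = f * g ∧ f * star f = CFC.abs a ∧ star g * g = CFC.abs a := by
  have habs : CFC.abs a = cfc (fun z : ℂ => (‖z‖ : ℂ)) a :=
    (CFC.abs_eq_cfcₙ_coe_norm ℂ a).trans cfcₙ_eq_cfc
  refine ⟨cfc (fun z : ℂ => z / (√‖z‖ : ℂ)) a, cfc (fun z : ℂ => (√‖z‖ : ℂ)) a, ?_, ?_, ?_⟩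
  · rw [← cfc_mul _ _ a Complex.continuous_div_sqrt_norm.continuousOn,
      cfc_congr fun z _ => Complex.div_sqrt_norm_mul_sqrt_norm z, cfc_id' ℂ a]
  · rw [habs, ← cfc_star, ← cfc_mul _ _ a Complex.continuous_div_sqrt_norm.continuousOn
      (Complex.continuous_div_sqrt_norm.star.continuousOn)]
    exact cfc_congr fun z _ => Complex.div_sqrt_norm_mul_conj z
  · rw [habs, ← cfc_star, ← cfc_mul (fun z : ℂ => star (√‖z‖ : ℂ)) (fun z : ℂ => (√‖z‖ : ℂ)) a]
    refine cfc_congr fun z _ => ?_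
    simp only [Complex.star_def, Complex.conj_ofReal]
    norm_cast
    exact Real.mul_self_sqrt (norm_nonneg z)

theorem norm_add_le_norm_cfcAbs_add_cfcAbs {a b : A} (ha : IsStarNormal a) (hb : IsStarNormal b) :
    ‖a + b‖ ≤ ‖CFC.abs a + CFC.abs b‖ := by
  obtain ⟨f₁, g₁, rfl, hf₁, hg₁⟩ := ha.exists_eq_mul_mul_star_eq_star_mul_eq_cfcAbs
  obtain ⟨f₂, g₂, rfl, hf₂, hg₂⟩ := hb.exists_eq_mul_mul_star_eq_star_mul_eq_cfcAbs
  have h := norm_mul_add_mul_sq_le f₁ f₂ g₁ g₂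
  rw [hf₁, hf₂, hg₁, hg₂, ← sq] at h
  exact le_of_pow_le_pow_left₀ two_ne_zero (norm_nonneg _) h

end CStarAlgebra

theorem norm_add_le_norm_abs_add_abs (S T : H →L[ℂ] H)
    (hS : IsStarNormal S) (hT : IsStarNormal T) :
    ‖S + T‖ ≤ ‖absOp S + absOp T‖ :=
  norm_add_le_norm_cfcAbs_add_cfcAbs hS hT
end

section
/- If S and T are positive bounded operators on a complex Hilbert space, then ‖S + T‖ ≤ max{‖S‖, ‖T‖} + ‖ST‖^{1/2}. -/
open scoped InnerProductSpace
variable {H : Type*} [NormedAddCommGroup H] [InnerProductSpace ℂ H] [CompleteSpace H]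

/-!
If `‖k‖ > max ‖a‖ ‖b‖ + √‖a * b‖`, then `k - a` and `k - b` are invertible with Neumann-series
bounds `‖(k - a)⁻¹‖ ≤ (‖k‖ - ‖a‖)⁻¹`, and these make `(k - a)(k - b) - ab` a small perturbation of
an invertible element, hence invertible. Since `(k - a)(k - b) - ab = k (k - (a + b))`, no such `k`
lies in the spectrum of `a + b`. For a self-adjoint element of a C⋆-algebra the spectral radius
is the norm.
-/

theorem isUnit_mul_sub_of_norm_inverse_mul_lt_one {A : Type*} [NormedRing A]
    [HasSummableGeomSeries A] {x y c : A} (hx : IsUnit x) (hy : IsUnit y)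
    (h : ‖Ring.inverse x‖ * ‖c‖ * ‖Ring.inverse y‖ < 1) : IsUnit (x * y - c) := by
  have hsmall : ‖Ring.inverse x * c * Ring.inverse y‖ < 1 :=
    (norm_mul_le_of_le (norm_mul_le _ _) le_rfl).trans_lt h
  have hfactor : x * y - c = x * (1 - Ring.inverse x * c * Ring.inverse y) * y := by
    rw [mul_sub, mul_one, ← mul_assoc, ← mul_assoc, Ring.mul_inverse_cancel x hx, one_mul, sub_mul,
      mul_assoc c, Ring.inverse_mul_cancel y hy, mul_one]
  rw [hfactor]
  exact (hx.mul (isUnit_one_sub_of_norm_lt_one hsmall)).mul hy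

section NormedAlgebra

variable {𝕜 A : Type*} [NontriviallyNormedField 𝕜] [NormedRing A] [NormedAlgebra 𝕜 A]
  [CompleteSpace A] [NormOneClass A]

namespace spectrum

theorem norm_resolvent_le_of_norm_lt {a : A} {k : 𝕜} (h : ‖a‖ < ‖k‖) :
    ‖resolvent a k‖ ≤ (‖k‖ - ‖a‖)⁻¹ := by
  have hk : 0 < ‖k‖ := (norm_nonneg a).trans_lt h
  have hsmall : ‖k⁻¹ • a‖ < 1 := by
    rwa [norm_smul, norm_inv, inv_mul_lt_iff₀ hk, mul_one]
  have hneumann : k • resolvent a k = ∑' n, (k⁻¹ • a) ^ n := by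
    simpa [geom_series_eq_inverse _ hsmall, resolvent, Units.smul_def] using
      units_smul_resolvent_self (r := Units.mk0 k (norm_pos_iff.mp hk)) (a := a)
  calc ‖resolvent a k‖ = ‖k‖⁻¹ * ‖k • resolvent a k‖ := by
        rw [norm_smul, inv_mul_cancel_left₀ hk.ne']
    _ ≤ ‖k‖⁻¹ * (1 - ‖k⁻¹ • a‖)⁻¹ := by
        gcongr
        simpa [hneumann] using tsum_geometric_le_of_norm_lt_one _ hsmall
    _ = (‖k‖ - ‖a‖)⁻¹ := by
        rw [norm_smul, norm_inv, ← mul_inv, mul_sub, mul_one, mul_inv_cancel_left₀ hk.ne']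

theorem mem_resolventSet_add_of_norm_mul_lt {a b : A} {k : 𝕜} (ha : ‖a‖ < ‖k‖) (hb : ‖b‖ < ‖k‖)
    (hab : ‖a * b‖ < (‖k‖ - ‖a‖) * (‖k‖ - ‖b‖)) : k ∈ resolventSet 𝕜 (a + b) := by
  have hk : k ≠ 0 := norm_pos_iff.mp ((norm_nonneg a).trans_lt ha)
  have hfactor : (algebraMap 𝕜 A k - a) * (algebraMap 𝕜 A k - b) - a * b =
      k • (algebraMap 𝕜 A k - (a + b)) := by
    simp only [Algebra.smul_def, sub_mul, mul_sub, mul_add, Algebra.commutes k a]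
    abel
  have hsmall : ‖resolvent a k‖ * ‖a * b‖ * ‖resolvent b k‖ < 1 := calc
    _ ≤ (‖k‖ - ‖a‖)⁻¹ * ‖a * b‖ * (‖k‖ - ‖b‖)⁻¹ := by
        gcongr
        exacts [norm_resolvent_le_of_norm_lt ha, norm_resolvent_le_of_norm_lt hb]
    _ < 1 := by
        rw [mul_right_comm, ← mul_inv, inv_mul_lt_iff₀ (by nlinarith), mul_one]
        exact hab
  have hunit := isUnit_mul_sub_of_norm_inverse_mul_lt_one (mem_resolventSet_of_norm_lt ha)
    (mem_resolventSet_of_norm_lt hb) hsmall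
  rw [hfactor] at hunit
  exact mem_resolventSet_iff.mpr ((isUnit_smul_iff (Units.mk0 k hk) _).mp hunit)

theorem norm_le_max_add_sqrt_of_mem_add {a b : A} {k : 𝕜} (hk : k ∈ spectrum 𝕜 (a + b)) :
    ‖k‖ ≤ max ‖a‖ ‖b‖ + √‖a * b‖ := by
  by_contra! hlt
  have hka : √‖a * b‖ < ‖k‖ - ‖a‖ := by linarith [le_max_left ‖a‖ ‖b‖]
  have hkb : √‖a * b‖ < ‖k‖ - ‖b‖ := by linarith [le_max_right ‖a‖ ‖b‖]
  have hsqrt := Real.sqrt_nonneg ‖a * b‖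
  refine hk (mem_resolventSet_add_of_norm_mul_lt (by linarith) (by linarith) ?_)
  calc ‖a * b‖ = √‖a * b‖ * √‖a * b‖ := (Real.mul_self_sqrt (norm_nonneg _)).symm
    _ < (‖k‖ - ‖a‖) * (‖k‖ - ‖b‖) := mul_lt_mul'' hka hkb hsqrt hsqrt

theorem spectralRadius_add_le_max_add_sqrt (a b : A) :
    spectralRadius 𝕜 (a + b) ≤ ENNReal.ofReal (max ‖a‖ ‖b‖ + √‖a * b‖) :=
  iSup₂_le fun _k hk ↦ by
    rw [← ENNReal.ofReal_coe_nnreal, coe_nnnorm]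
    exact ENNReal.ofReal_le_ofReal (norm_le_max_add_sqrt_of_mem_add hk)

end spectrum

end NormedAlgebra

theorem IsSelfAdjoint.norm_add_le_max_add_sqrt_norm_mul {A : Type*} [CStarAlgebra A] {a b : A}
    (h : IsSelfAdjoint (a + b)) : ‖a + b‖ ≤ max ‖a‖ ‖b‖ + √‖a * b‖ := by
  nontriviality A
  rw [← h.toReal_spectralRadius_complex_eq_norm]
  exact ENNReal.toReal_le_of_le_ofReal (by positivity)
    (spectrum.spectralRadius_add_le_max_add_sqrt a b)

theorem norm_add_le_max_add_sqrt_norm_mul (S T : H →L[ℂ] H)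
    (hS : 0 ≤ S) (hT : 0 ≤ T) :
    ‖S + T‖ ≤ max ‖S‖ ‖T‖ + Real.sqrt ‖S * T‖ :=
  ((IsSelfAdjoint.of_nonneg hS).add (.of_nonneg hT)).norm_add_le_max_add_sqrt_norm_mul
end

section
/- If S and T are bounded operators on a complex Hilbert space such that the product ST is self-adjoint, then ‖ST‖ ≤ ‖Re(TS)‖, where Re(X) = (X + X*)/2. -/
/-!
Since `S * T` is self-adjoint, its norm equals its spectral radius and is attained at a real
point `z` of its spectrum; if `z ≠ 0`, then `z` is also in the spectrum of `T * S`. For any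
operator `B`, the real part of a spectral value is bounded by `‖Re B‖`: if `Re z > ‖Re B‖`, then
`Re ⟪(z - B) x, x⟫ ≥ (Re z - ‖Re B‖) ‖x‖²`, so the numerical range of `z - B` stays away
from `0` and `z - B` is invertible. Applying this to `± T * S` gives `|z| ≤ ‖Re (T * S)‖`.
-/

open scoped InnerProductSpace ComplexConjugate
open ContinuousLinearMap RCLike

section RCLike

variable {𝕜 E : Type*} [RCLike 𝕜] [NormedAddCommGroup E] [InnerProductSpace 𝕜 E] [CompleteSpace E]

theorem inner_half_add_star_apply_self (B : E →L[𝕜] E) (x : E) :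
    ⟪((2 : 𝕜)⁻¹ • (B + star B)) x, x⟫_𝕜 = re ⟪B x, x⟫_𝕜 := by
  have h_star : ⟪(star B) x, x⟫_𝕜 = conj ⟪B x, x⟫_𝕜 := by
    rw [star_eq_adjoint, adjoint_inner_left, inner_conj_symm]
  rw [smul_apply, add_apply, inner_smul_left, inner_add_left, h_star, add_conj, map_inv₀,
    map_ofNat]
  field_simp

theorem re_inner_apply_self_le (B : E →L[𝕜] E) (x : E) :
    re ⟪B x, x⟫_𝕜 ≤ ‖(2 : 𝕜)⁻¹ • (B + star B)‖ * ‖x‖ ^ 2 := by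
  set R := (2 : 𝕜)⁻¹ • (B + star B)
  calc re ⟪B x, x⟫_𝕜 = re ⟪R x, x⟫_𝕜 := by rw [inner_half_add_star_apply_self, ofReal_re]
    _ ≤ ‖R x‖ * ‖x‖ := re_inner_le_norm _ _
    _ ≤ ‖R‖ * ‖x‖ * ‖x‖ := by gcongr; exact R.le_opNorm x
    _ = ‖R‖ * ‖x‖ ^ 2 := by ring

theorem re_le_norm_half_add_star_of_mem_spectrum {B : E →L[𝕜] E} {z : 𝕜}
    (hz : z ∈ spectrum 𝕜 B) : re z ≤ ‖(2 : 𝕜)⁻¹ • (B + star B)‖ := by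
  by_contra! hlt
  set r := ‖(2 : 𝕜)⁻¹ • (B + star B)‖
  have hδ : 0 < (re z - r).toNNReal := Real.toNNReal_pos.mpr (sub_pos.mpr hlt)
  refine spectrum.mem_iff.mp hz (isUnit_of_forall_le_norm_inner_map _ hδ fun x ↦ ?_)
  have h_inner : ⟪(algebraMap 𝕜 (E →L[𝕜] E) z - B) x, x⟫_𝕜 = conj z * ‖x‖ ^ 2 - ⟪B x, x⟫_𝕜 := by
    rw [sub_apply, inner_sub_left, Algebra.algebraMap_eq_smul_one, smul_apply,
      one_apply_eq_self, inner_smul_left, inner_self_eq_norm_sq_to_K]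
  calc ‖x‖ ^ 2 * ((re z - r).toNNReal : ℝ) = re z * ‖x‖ ^ 2 - r * ‖x‖ ^ 2 := by
        rw [Real.coe_toNNReal _ (sub_pos.mpr hlt).le]; ring
    _ ≤ re z * ‖x‖ ^ 2 - re ⟪B x, x⟫_𝕜 := by gcongr; exact re_inner_apply_self_le B x
    _ = re ⟪(algebraMap 𝕜 (E →L[𝕜] E) z - B) x, x⟫_𝕜 := by
        rw [h_inner, map_sub, ← ofReal_pow, re_mul_ofReal, conj_re]
    _ ≤ _ := re_le_norm _

theorem abs_re_le_norm_half_add_star_of_mem_spectrum {B : E →L[𝕜] E} {z : 𝕜}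
    (hz : z ∈ spectrum 𝕜 B) : |re z| ≤ ‖(2 : 𝕜)⁻¹ • (B + star B)‖ := by
  have h_neg : -z ∈ spectrum 𝕜 (-B) := by rw [← spectrum.neg_eq]; exact Set.neg_mem_neg.mpr hz
  have h_re_neg := re_le_norm_half_add_star_of_mem_spectrum h_neg
  rw [star_neg, ← neg_add, smul_neg, norm_neg, map_neg] at h_re_neg
  exact abs_le.mpr ⟨by linarith, re_le_norm_half_add_star_of_mem_spectrum hz⟩

end RCLike

variable {H : Type*} [NormedAddCommGroup H] [InnerProductSpace ℂ H] [CompleteSpace H]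

theorem norm_mul_le_norm_re_of_isSelfAdjoint (S T : H →L[ℂ] H)
    (h : IsSelfAdjoint (S * T)) :
    ‖S * T‖ ≤ ‖(2 : ℂ)⁻¹ • (T * S + star (T * S))‖ := by
  rcases eq_or_ne (S * T) 0 with h0 | h0
  · rw [h0, norm_zero]; exact norm_nonneg _
  have : Nontrivial (H →L[ℂ] H) := ⟨⟨S * T, 0, h0⟩⟩
  obtain ⟨z, hz, hz_norm⟩ := spectrum.exists_nnnorm_eq_spectralRadius (S * T)
  rw [h.spectralRadius_eq_nnnorm, ENNReal.coe_inj] at hz_norm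
  have hz_norm' : ‖z‖ = ‖S * T‖ := congrArg NNReal.toReal hz_norm
  have hz_ne : z ≠ 0 := by rintro rfl; exact h0 (norm_eq_zero.mp (by simpa using hz_norm'.symm))
  have hz' : z ∈ spectrum ℂ (T * S) := by
    have : z ∈ spectrum ℂ (S * T) \ {0} := ⟨hz, hz_ne⟩
    rw [spectrum.nonzero_mul_comm] at this
    exact this.1
  calc ‖S * T‖ = |z.re| := by rw [← hz_norm', h.mem_spectrum_eq_re hz, Complex.norm_real,
        Real.norm_eq_abs, Complex.ofReal_re]
    _ ≤ _ := abs_re_le_norm_half_add_star_of_mem_spectrum hz'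
end

section
/- Let S and T be positive bounded operators on a complex Hilbert space and f₁, f₂, g₁, g₂ nonnegative continuous functions on [0,∞) with f₁(x)f₂(x) = x and g₁(x)g₂(x) = x for all x ≥ 0. Then for every t > 0, ‖S + T‖ ≤ (1/2)(‖S‖ + ‖T‖) + (1/2)√((‖S‖ − ‖T‖)² + ‖(1/t) f₁(S)g₁(T) + t f₂(S)g₂(T)‖²). -/
/-!
Write `Fᵢ = fᵢ(S)`, `Gᵢ = gᵢ(T)` and `C = t⁻¹ F₁G₁ + t F₂G₂`. The row `A = (F₁, t G₂) : H ⊕ H → H`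
and the column `B = (F₂, t⁻¹ G₁) : H → H ⊕ H` satisfy `A B = S + T` and
`B A = [[S, t F₂G₂], [t⁻¹ G₁F₁, T]]`. As `A B` is positive, `‖A B‖` is an approximate eigenvalue
of `A B`; applying `B` to approximate eigenvectors turns them into approximate eigenvectors of
`B A`, so `‖A B‖` is bounded by the numerical range of `B A`. Because `F₁` and `G₁` are
self-adjoint, the two off-diagonal terms of `re ⟪B A x, x⟫` combine to `re ⟪C x₂, x₁⟫`, giving
`re ⟪B A x, x⟫ ≤ ‖S‖ ‖x₁‖² + ‖T‖ ‖x₂‖² + ‖C‖ ‖x₁‖ ‖x₂‖`, and the largest eigenvalue of the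
matrix `[[‖S‖, ‖C‖/2], [‖C‖/2, ‖T‖]]` is the stated bound.
-/

open scoped InnerProductSpace
variable {H : Type*} [NormedAddCommGroup H] [InnerProductSpace ℂ H] [CompleteSpace H]

open Filter Topology

theorem quadratic_form_le_largest_eigenvalue (a b r p q : ℝ) :
    a * p ^ 2 + b * q ^ 2 + r * (p * q) ≤
      (1 / 2 * (a + b) + 1 / 2 * √((a - b) ^ 2 + r ^ 2)) * (p ^ 2 + q ^ 2) := by
  -- Cauchy–Schwarz for `(a - b, r)` and `(p² - q², 2pq)`, the latter of length `p² + q²`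
  have hcs : (a - b) * (p ^ 2 - q ^ 2) + r * (2 * p * q) ≤
      √((a - b) ^ 2 + r ^ 2) * (p ^ 2 + q ^ 2) := by
    refine le_of_abs_le (abs_le_of_sq_le_sq ?_ (by positivity))
    rw [mul_pow, Real.sq_sqrt (by positivity)]
    nlinarith [sq_nonneg (r * (p ^ 2 - q ^ 2) - (a - b) * (2 * p * q))]
  linarith

theorem cfc_mul_cfc_eq_self {R A : Type*} {p : A → Prop} [CommSemiring R] [StarRing R]
    [MetricSpace R] [IsTopologicalSemiring R] [ContinuousStar R] [TopologicalSpace A] [Ring A]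
    [StarRing A] [Algebra R A] [ContinuousFunctionalCalculus R A p] {f g : R → R} {a : A}
    (hf : ContinuousOn f (spectrum R a)) (hg : ContinuousOn g (spectrum R a))
    (hfg : ∀ x ∈ spectrum R a, f x * g x = x) (ha : p a := by cfc_tac) :
    cfc f a * cfc g a = a := by
  rw [← cfc_mul f g a, cfc_congr hfg, cfc_id' R a]

section InnerProductSpace

variable {𝕜 E F : Type*} [RCLike 𝕜] [NormedAddCommGroup E] [InnerProductSpace 𝕜 E]
  [NormedAddCommGroup F] [InnerProductSpace 𝕜 F]

theorem ContinuousLinearMap.re_inner_apply_le (M : E →L[𝕜] F) (x : E) (y : F) :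
    RCLike.re ⟪M x, y⟫_𝕜 ≤ ‖M‖ * ‖x‖ * ‖y‖ :=
  (re_inner_le_norm _ _).trans (mul_le_mul_of_nonneg_right (M.le_opNorm x) (norm_nonneg y))

theorem ContinuousLinearMap.re_inner_apply_le_of_norm_le_one (M : E →L[𝕜] F) (x : E) {y : F}
    (hy : ‖y‖ ≤ 1) : RCLike.re ⟪M x, y⟫_𝕜 ≤ ‖M‖ * ‖x‖ :=
  (M.re_inner_apply_le x y).trans (mul_le_of_le_one_right (by positivity) hy)

theorem re_inner_add_re_inner_add_re_inner_le (S T C : E →L[𝕜] E) (x₁ x₂ : E) :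
    RCLike.re ⟪S x₁, x₁⟫_𝕜 + RCLike.re ⟪T x₂, x₂⟫_𝕜 + RCLike.re ⟪C x₂, x₁⟫_𝕜 ≤
      (1 / 2 * (‖S‖ + ‖T‖) + 1 / 2 * √((‖S‖ - ‖T‖) ^ 2 + ‖C‖ ^ 2)) *
        (‖x₁‖ ^ 2 + ‖x₂‖ ^ 2) := by
  have hS := S.re_inner_apply_le x₁ x₁
  have hT := T.re_inner_apply_le x₂ x₂
  have hC := C.re_inner_apply_le x₂ x₁
  calc _ ≤ ‖S‖ * ‖x₁‖ ^ 2 + ‖T‖ * ‖x₂‖ ^ 2 + ‖C‖ * (‖x₁‖ * ‖x₂‖) := by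
        linarith
    _ ≤ _ := quadratic_form_le_largest_eigenvalue ..

theorem ContinuousLinearMap.norm_apply_sub_opNorm_smul_sq_le (P : E →L[𝕜] E) {y : E}
    (hy : ‖y‖ ≤ 1) :
    ‖P y - (‖P‖ : 𝕜) • y‖ ^ 2 ≤ 2 * ‖P‖ * (‖P‖ - RCLike.re ⟪P y, y⟫_𝕜) := by
  have hy2 : ‖y‖ ^ 2 ≤ 1 := pow_le_one₀ (norm_nonneg y) hy
  have hPy : ‖P y‖ ^ 2 ≤ ‖P‖ ^ 2 := by
    grw [P.le_opNorm y, mul_pow, hy2, mul_one]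
  rw [norm_sub_sq (𝕜 := 𝕜), inner_smul_right, RCLike.re_ofReal_mul, norm_smul,
    RCLike.norm_ofReal, abs_norm, mul_pow]
  nlinarith [sq_nonneg ‖P‖]

theorem ContinuousLinearMap.IsPositive.exists_seq_re_inner_tendsto_opNorm {P : E →L[𝕜] E}
    (hP : P.IsPositive) :
    ∃ y : ℕ → E, (∀ n, ‖y n‖ ≤ 1) ∧
      Tendsto (fun n ↦ RCLike.re ⟪P (y n), y n⟫_𝕜) atTop (𝓝 ‖P‖) := by
  have hsup : ‖P‖ = ⨆ x, P.rayleighQuotient x := by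
    simp_rw [P.norm_eq_iSup_rayleighQuotient hP.isSymmetric,
      abs_of_nonneg (div_nonneg (hP.2 _) (sq_nonneg _))]
  have hnear (n : ℕ) : ∃ y : E, ‖y‖ ≤ 1 ∧ ‖P‖ - 1 / (n + 1) < RCLike.re ⟪P y, y⟫_𝕜 := by
    obtain ⟨x, hx⟩ := exists_lt_of_lt_ciSup (b := ‖P‖ - 1 / (n + 1))
      (by rw [← hsup]; exact sub_lt_self ‖P‖ Nat.one_div_pos_of_nat)
    -- the Rayleigh quotient is the quadratic form at the normalised vector (also for `x = 0`)
    refine ⟨(‖x‖⁻¹ : 𝕜) • x, ?_, ?_⟩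
    · rw [norm_smul, norm_inv, RCLike.norm_ofReal, abs_norm]
      exact inv_mul_le_one_of_le₀ le_rfl (norm_nonneg x)
    · rwa [← P.reApplyInnerSelf_apply, P.reApplyInnerSelf_smul, norm_inv, RCLike.norm_ofReal,
        abs_norm, inv_pow, inv_mul_eq_div]
  choose y hy hnear using hnear
  refine ⟨y, hy, tendsto_of_tendsto_of_tendsto_of_le_of_le ?_ tendsto_const_nhds
    (fun n ↦ (hnear n).le) fun n ↦ ?_⟩
  · simpa using tendsto_one_div_add_atTop_nhds_zero_nat.const_sub ‖P‖
  · exact (P.re_inner_apply_le_of_norm_le_one _ (hy n)).trans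
      (mul_le_of_le_one_right (norm_nonneg P) (hy n))

theorem ContinuousLinearMap.tendsto_norm_apply_sub_opNorm_smul (P : E →L[𝕜] E) {y : ℕ → E}
    (hy : ∀ n, ‖y n‖ ≤ 1) (hre : Tendsto (fun n ↦ RCLike.re ⟪P (y n), y n⟫_𝕜) atTop (𝓝 ‖P‖)) :
    Tendsto (fun n ↦ ‖P (y n) - (‖P‖ : 𝕜) • y n‖) atTop (𝓝 0) := by
  have hbound :
      Tendsto (fun n ↦ √(2 * ‖P‖ * (‖P‖ - RCLike.re ⟪P (y n), y n⟫_𝕜))) atTop (𝓝 0) := by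
    simpa using ((hre.const_sub ‖P‖).const_mul (2 * ‖P‖)).sqrt
  refine squeeze_zero (fun n ↦ norm_nonneg _) (fun n ↦ ?_) hbound
  exact Real.le_sqrt_of_sq_le (P.norm_apply_sub_opNorm_smul_sq_le (hy n))

theorem sub_mul_norm_le_of_re_inner_comp_le {A : F →L[𝕜] E} {B : E →L[𝕜] F} {c : ℝ}
    (hc : ∀ x, RCLike.re ⟪B (A x), x⟫_𝕜 ≤ c * ‖x‖ ^ 2) (μ : ℝ) (y : E) :
    (μ - c) * ‖B y‖ ≤ ‖B‖ * ‖A (B y) - (μ : 𝕜) • y‖ := by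
  set x := B y
  set e := A x - (μ : 𝕜) • y
  have hBAx : B (A x) = (μ : 𝕜) • x + B e := by simp [e, x]
  have hsq : (μ - c) * ‖x‖ ^ 2 ≤ ‖B‖ * ‖e‖ * ‖x‖ := by
    have h := hc x
    rw [hBAx, inner_add_left, inner_smul_left, map_add, RCLike.conj_ofReal, RCLike.re_ofReal_mul,
      inner_self_eq_norm_sq] at h
    have := (-B).re_inner_apply_le e x
    rw [neg_apply, inner_neg_left, map_neg, norm_neg] at this
    linarith
  rcases (norm_nonneg x).eq_or_lt with hx | hx
  · rw [← hx, mul_zero]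
    positivity
  · exact le_of_mul_le_mul_right (by linarith) hx

theorem norm_comp_le_of_re_inner_comp_le {A : F →L[𝕜] E} {B : E →L[𝕜] F}
    (hAB : (A ∘L B).IsPositive) {c : ℝ} (hc0 : 0 ≤ c)
    (hc : ∀ x, RCLike.re ⟪B (A x), x⟫_𝕜 ≤ c * ‖x‖ ^ 2) : ‖A ∘L B‖ ≤ c := by
  set l := ‖A ∘L B‖
  by_contra! hcl
  obtain ⟨y, hy, hre⟩ := hAB.exists_seq_re_inner_tendsto_opNorm
  have key (n : ℕ) : (l - c) * RCLike.re ⟪A (B (y n)), y n⟫_𝕜 ≤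
      ‖A‖ * ‖B‖ * ‖A (B (y n)) - (l : 𝕜) • y n‖ :=
    calc (l - c) * RCLike.re ⟪A (B (y n)), y n⟫_𝕜 ≤ (l - c) * (‖A‖ * ‖B (y n)‖) :=
          mul_le_mul_of_nonneg_left (A.re_inner_apply_le_of_norm_le_one _ (hy n))
            (sub_nonneg.2 hcl.le)
      _ = ‖A‖ * ((l - c) * ‖B (y n)‖) := by ring
      _ ≤ ‖A‖ * (‖B‖ * ‖A (B (y n)) - (l : 𝕜) • y n‖) :=
          mul_le_mul_of_nonneg_left (sub_mul_norm_le_of_re_inner_comp_le hc l (y n))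
            (norm_nonneg A)
      _ = _ := (mul_assoc ..).symm
  have hlim := le_of_tendsto_of_tendsto' (hre.const_mul (l - c))
    (((A ∘L B).tendsto_norm_apply_sub_opNorm_smul hy hre).const_mul (‖A‖ * ‖B‖)) key
  rw [mul_zero] at hlim
  exact (mul_pos (sub_pos.2 hcl) (hc0.trans_lt hcl)).not_ge hlim

end InnerProductSpace

namespace ContinuousLinearMap

variable {𝕜 E₁ E₂ F : Type*} [RCLike 𝕜] [NormedAddCommGroup E₁] [InnerProductSpace 𝕜 E₁]
  [NormedAddCommGroup E₂] [InnerProductSpace 𝕜 E₂] [NormedAddCommGroup F] [InnerProductSpace 𝕜 F]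

noncomputable def blockRow (X : E₁ →L[𝕜] F) (Y : E₂ →L[𝕜] F) : WithLp 2 (E₁ × E₂) →L[𝕜] F :=
  X ∘L WithLp.fstL 2 𝕜 E₁ E₂ + Y ∘L WithLp.sndL 2 𝕜 E₁ E₂

noncomputable def blockCol (X : F →L[𝕜] E₁) (Y : F →L[𝕜] E₂) : F →L[𝕜] WithLp 2 (E₁ × E₂) :=
  (WithLp.prodContinuousLinearEquiv 2 𝕜 E₁ E₂).symm.toContinuousLinearMap ∘L X.prod Y

@[simp]
theorem blockRow_apply (X : E₁ →L[𝕜] F) (Y : E₂ →L[𝕜] F) (x : WithLp 2 (E₁ × E₂)) :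
    blockRow X Y x = X x.fst + Y x.snd :=
  rfl

@[simp]
theorem blockCol_apply (X : F →L[𝕜] E₁) (Y : F →L[𝕜] E₂) (y : F) :
    blockCol X Y y = WithLp.toLp 2 (X y, Y y) :=
  rfl

theorem blockRow_comp_blockCol (X : E₁ →L[𝕜] F) (Y : E₂ →L[𝕜] F) (X' : F →L[𝕜] E₁)
    (Y' : F →L[𝕜] E₂) : blockRow X Y ∘L blockCol X' Y' = X ∘L X' + Y ∘L Y' := by
  ext; simp

theorem re_inner_blockCol_blockRow {F₁ F₂ G₁ G₂ S T : H →L[ℂ] H} (hF₁ : IsSelfAdjoint F₁)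
    (hG₁ : IsSelfAdjoint G₁) (hS : F₂ * F₁ = S) (hT : G₁ * G₂ = T) {t : ℝ} (ht : t ≠ 0)
    (x : WithLp 2 (H × H)) :
    RCLike.re ⟪blockCol F₂ (t⁻¹ • G₁) (blockRow F₁ (t • G₂) x), x⟫_ℂ =
      RCLike.re ⟪S x.fst, x.fst⟫_ℂ + RCLike.re ⟪T x.snd, x.snd⟫_ℂ +
        RCLike.re ⟪(t⁻¹ • (F₁ * G₁) + t • (F₂ * G₂)) x.snd, x.fst⟫_ℂ := by
  have hcross : RCLike.re ⟪G₁ (F₁ x.fst), x.snd⟫_ℂ = RCLike.re ⟪F₁ (G₁ x.snd), x.fst⟫_ℂ := by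
    have hG : ⟪G₁ (F₁ x.fst), x.snd⟫_ℂ = ⟪F₁ x.fst, G₁ x.snd⟫_ℂ := hG₁.isSymmetric _ _
    have hF : ⟪F₁ x.fst, G₁ x.snd⟫_ℂ = ⟪x.fst, F₁ (G₁ x.snd)⟫_ℂ := hF₁.isSymmetric _ _
    rw [hG, hF, inner_re_symm]
  subst hS hT
  simp only [blockRow_apply, blockCol_apply, WithLp.prod_inner_apply, add_apply, smul_apply,
    mul_apply_eq_comp, map_add, map_smul_of_tower, RCLike.real_smul_eq_coe_smul (K := ℂ),
    inner_add_left, inner_smul_left, RCLike.conj_ofReal, RCLike.re_ofReal_mul, WithLp.fst,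
    WithLp.snd] at hcross ⊢
  rw [hcross, mul_add, mul_inv_cancel_left₀ ht]
  ring

end ContinuousLinearMap

open ContinuousLinearMap

theorem norm_add_le_of_positive_cfc_general (S T : H →L[ℂ] H) (hS : 0 ≤ S) (hT : 0 ≤ T)
    (t : ℝ) (ht : 0 < t) (f₁ f₂ g₁ g₂ : ℝ → ℝ)
    (hf₁ : ContinuousOn f₁ (Set.Ici 0)) (hf₂ : ContinuousOn f₂ (Set.Ici 0))
    (hg₁ : ContinuousOn g₁ (Set.Ici 0)) (hg₂ : ContinuousOn g₂ (Set.Ici 0))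
    (hf : ∀ x ≥ (0 : ℝ), f₁ x * f₂ x = x) (hg : ∀ x ≥ (0 : ℝ), g₁ x * g₂ x = x) :
    ‖S + T‖ ≤ (1 / 2) * (‖S‖ + ‖T‖) + (1 / 2) * Real.sqrt ((‖S‖ - ‖T‖) ^ 2 +
      ‖t⁻¹ • (cfc f₁ S * cfc g₁ T) + t • (cfc f₂ S * cfc g₂ T)‖ ^ 2) := by
  have cfc_factor {a : H →L[ℂ] H} (ha : 0 ≤ a) {u v : ℝ → ℝ} (hu : ContinuousOn u (Set.Ici 0))
      (hv : ContinuousOn v (Set.Ici 0)) (huv : ∀ x ≥ (0 : ℝ), u x * v x = x) :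
      cfc u a * cfc v a = a := by
    have hspec : spectrum ℝ a ⊆ Set.Ici 0 := fun _ hx ↦ spectrum_nonneg_of_nonneg ha hx
    exact cfc_mul_cfc_eq_self (hu.mono hspec) (hv.mono hspec) fun x hx ↦ huv x (hspec hx)
  have hF₁₂ : cfc f₁ S * cfc f₂ S = S := cfc_factor hS hf₁ hf₂ hf
  have hF₂₁ : cfc f₂ S * cfc f₁ S = S := (cfc_commute_cfc f₁ f₂ S).eq.symm.trans hF₁₂
  have hG₁₂ : cfc g₁ T * cfc g₂ T = T := cfc_factor hT hg₁ hg₂ hg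
  have hG₂₁ : cfc g₂ T * cfc g₁ T = T := (cfc_commute_cfc g₁ g₂ T).eq.symm.trans hG₁₂
  have hAB : blockRow (cfc f₁ S) (t • cfc g₂ T) ∘L blockCol (cfc f₂ S) (t⁻¹ • cfc g₁ T) =
      S + T := by
    rw [blockRow_comp_blockCol, ← mul_def, ← mul_def, smul_mul_smul_comm, mul_inv_cancel₀ ht.ne',
      one_smul, hF₁₂, hG₂₁]
  rw [← hAB]
  refine norm_comp_le_of_re_inner_comp_le (hAB ▸ (nonneg_iff_isPositive _).1 (add_nonneg hS hT))
    (by positivity) fun x ↦ ?_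
  rw [re_inner_blockCol_blockRow (cfc_predicate _ _) (cfc_predicate _ _) hF₂₁ hG₁₂ ht.ne',
    WithLp.prod_norm_sq_eq_of_L2]
  exact re_inner_add_re_inner_add_re_inner_le _ _ _ _ _

theorem norm_add_le_of_positive_cfc (S T : H →L[ℂ] H) (hS : 0 ≤ S) (hT : 0 ≤ T)
    (t : ℝ) (ht : 0 < t) (f₁ f₂ g₁ g₂ : ℝ → ℝ)
    (hf₁ : ContinuousOn f₁ (Set.Ici 0)) (hf₂ : ContinuousOn f₂ (Set.Ici 0))
    (hg₁ : ContinuousOn g₁ (Set.Ici 0)) (hg₂ : ContinuousOn g₂ (Set.Ici 0))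
    (hf₁0 : ∀ x ≥ (0 : ℝ), 0 ≤ f₁ x) (hf₂0 : ∀ x ≥ (0 : ℝ), 0 ≤ f₂ x)
    (hg₁0 : ∀ x ≥ (0 : ℝ), 0 ≤ g₁ x) (hg₂0 : ∀ x ≥ (0 : ℝ), 0 ≤ g₂ x)
    (hf : ∀ x ≥ (0 : ℝ), f₁ x * f₂ x = x) (hg : ∀ x ≥ (0 : ℝ), g₁ x * g₂ x = x) :
    ‖S + T‖ ≤ (1 / 2) * (‖S‖ + ‖T‖) + (1 / 2) * Real.sqrt ((‖S‖ - ‖T‖) ^ 2 +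
      ‖t⁻¹ • (cfc f₁ S * cfc g₁ T) + t • (cfc f₂ S * cfc g₂ T)‖ ^ 2) :=
  norm_add_le_of_positive_cfc_general S T hS hT t ht f₁ f₂ g₁ g₂ hf₁ hf₂ hg₁ hg₂ hf hg
end

section
/- If S and T are positive bounded operators on a complex Hilbert space, then ‖S − T‖ ≥ max{‖S‖, ‖T‖} − ‖S^{1/2} T^{1/2}‖. -/
/-!
With `x = S^{1/2}` and `y = T^{1/2}` one has `S² = x (S - T) x + (x y)(x y)⋆`, so the C⋆-identity
gives `‖S‖² ≤ ‖S‖ ‖S - T‖ + ‖x y‖²`, whence `‖S‖ - ‖x y‖ ≤ ‖S - T‖`. Exchanging `S` and `T`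
costs nothing, since `‖y x‖ = ‖(x y)⋆‖ = ‖x y‖`.
-/

section CStarRing

variable {E : Type*} [NonUnitalNormedRing E] [StarRing E] [CStarRing E] {x y : E}

lemma IsSelfAdjoint.norm_mul_comm (hx : IsSelfAdjoint x) (hy : IsSelfAdjoint y) :
    ‖y * x‖ = ‖x * y‖ := by
  rw [← norm_star (x * y), star_mul, hx.star_eq, hy.star_eq]

lemma IsSelfAdjoint.norm_mul_self_sub_norm_mul_le (hx : IsSelfAdjoint x) (hy : IsSelfAdjoint y) :
    ‖x * x‖ - ‖x * y‖ ≤ ‖x * x - y * y‖ := by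
  have hxx : IsSelfAdjoint (x * x) := by
    simpa only [hx.star_eq] using IsSelfAdjoint.star_mul_self x
  have hsplit : (x * x) * (x * x) = x * (x * x - y * y) * x + (x * y) * star (x * y) := by
    rw [star_mul, hx.star_eq, hy.star_eq]
    noncomm_ring
  have hsq : ‖x * x‖ ^ 2 ≤ ‖x * x‖ * ‖x * x - y * y‖ + ‖x * y‖ ^ 2 := by
    calc ‖x * x‖ ^ 2 = ‖(x * x) * (x * x)‖ := hxx.norm_mul_self.symm
      _ ≤ ‖x * (x * x - y * y) * x‖ + ‖(x * y) * star (x * y)‖ := hsplit ▸ norm_add_le _ _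
      _ ≤ ‖x‖ * ‖x * x - y * y‖ * ‖x‖ + ‖x * y‖ ^ 2 := by
          gcongr
          · exact (norm_mul_le _ _).trans (by gcongr; exact norm_mul_le _ _)
          · exact (CStarRing.norm_self_mul_star.trans (sq _).symm).le
      _ = ‖x * x‖ * ‖x * x - y * y‖ + ‖x * y‖ ^ 2 := by
          rw [mul_right_comm, hx.norm_mul_self, sq ‖x‖]
  nlinarith [norm_nonneg (x * x), norm_nonneg (x * y), norm_nonneg (x * x - y * y)]

end CStarRing

namespace CFC

variable {A : Type*} [NonUnitalCStarAlgebra A] [PartialOrder A] [StarOrderedRing A] {a b : A}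

lemma norm_sub_norm_sqrt_mul_sqrt_le (ha : 0 ≤ a) (hb : 0 ≤ b) :
    ‖a‖ - ‖sqrt a * sqrt b‖ ≤ ‖a - b‖ := by
  simpa only [sqrt_mul_sqrt_self a ha, sqrt_mul_sqrt_self b hb] using
    (sqrt_nonneg a).isSelfAdjoint.norm_mul_self_sub_norm_mul_le (sqrt_nonneg b).isSelfAdjoint

lemma max_norm_sub_norm_sqrt_mul_sqrt_le (ha : 0 ≤ a) (hb : 0 ≤ b) :
    max ‖a‖ ‖b‖ - ‖sqrt a * sqrt b‖ ≤ ‖a - b‖ := by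
  have hab := norm_sub_norm_sqrt_mul_sqrt_le ha hb
  have hba := norm_sub_norm_sqrt_mul_sqrt_le hb ha
  rw [norm_sub_rev, (sqrt_nonneg a).isSelfAdjoint.norm_mul_comm (sqrt_nonneg b).isSelfAdjoint]
    at hba
  exact sub_le_iff_le_add.mpr (max_le (sub_le_iff_le_add.mp hab) (sub_le_iff_le_add.mp hba))

end CFC

open scoped InnerProductSpace
variable {H : Type*} [NormedAddCommGroup H] [InnerProductSpace ℂ H] [CompleteSpace H]

theorem norm_sub_ge_max_sub_norm_sqrt_mul_sqrt (S T : H →L[ℂ] H)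
    (hS : 0 ≤ S) (hT : 0 ≤ T) :
    ‖S - T‖ ≥ max ‖S‖ ‖T‖ - ‖S ^ ((1 : ℝ) / 2) * T ^ ((1 : ℝ) / 2)‖ := by
  rw [← CFC.sqrt_eq_rpow, ← CFC.sqrt_eq_rpow]
  exact CFC.max_norm_sub_norm_sqrt_mul_sqrt_le hS hT
end
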